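/- Fix an integer s ≥ 1 and x ∈ ℝ. Assume δ_{11} > 0, δ_{10} > 0 and δ_{00} > 0, assume the MCAR condition for unit nonresponse: F_A(u | 1,1) = F_A(u | 0,0) and F_B(u | 1,1) = F_B(u | 0,0) for all u ∈ ℝ, and let Y̲^B ∈ ℝ satisfy Y̲^B ≤ Y^B_i for all units i and Y̲^B ≤ x. Then D^s_A(x) = E_A[g_{s,x} | 1,1]·(δ_{11} + δ_{00}) + E_A[g_{s,x} | 1,0]·δ_{10} (point identification of population A's dominance function), and E_B[g_{s,x} | 1,1]·(δ_{11} + δ_{00}) ≤ D^s_B(x) ≤ E_B[g_{s,x} | 1,1]·(δ_{11} + δ_{00}) + ((x − Y̲^B)^{s−1}/(s−1)!)·δ_{10}. (Identification bounds under MCAR for unit nonresponse and the worst case for wave nonresponse, Proposition D.2.) -/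

import Mathlib

open Finset

noncomputable section

/-- Fraction of units in the response class `(a, b)`. -/
def delta {N : ℕ} (ZA ZB : Fin N → Bool) (a b : Bool) : ℝ :=
  ((univ.filter (fun i => ZA i = a ∧ ZB i = b)).card : ℝ) / N

/-- Conditional mean of `g ∘ Y` given the response class `(a, b)`. -/
def condMean {N : ℕ} (Y : Fin N → ℝ) (ZA ZB : Fin N → Bool) (a b : Bool) (g : ℝ → ℝ) : ℝ :=
  (∑ i ∈ univ.filter (fun i => ZA i = a ∧ ZB i = b), g (Y i)) / ((N : ℝ) * delta ZA ZB a b)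

/-- Conditional CDF of `Y` given the response class `(a, b)`. -/
def condCDF' {N : ℕ} (Y : Fin N → ℝ) (ZA ZB : Fin N → Bool) (a b : Bool) (x : ℝ) : ℝ :=
  ((univ.filter (fun i => Y i ≤ x ∧ ZA i = a ∧ ZB i = b)).card : ℝ) / ((N : ℝ) * delta ZA ZB a b)

/-- Population CDF of `Y`. -/
def popCDF {N : ℕ} (Y : Fin N → ℝ) (x : ℝ) : ℝ :=
  ((univ.filter (fun i => Y i ≤ x)).card : ℝ) / N

/-- `s`-th order dominance function of the population `Y`. -/
def domFn {N : ℕ} (Y : Fin N → ℝ) (s : ℕ) (x : ℝ) : ℝ :=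
  (∑ i ∈ univ.filter (fun i => Y i ≤ x), (x - Y i) ^ (s - 1) / ((s - 1).factorial : ℝ)) / N

/-- `g_{s,x}(y) = ((x-y)^{s-1}/(s-1)!) 1[y ≤ x]`. -/
def gfun (s : ℕ) (x : ℝ) : ℝ → ℝ :=
  fun y => ((x - y) ^ (s - 1) / ((s - 1).factorial : ℝ)) * (if y ≤ x then 1 else 0)

/-!
Summing `g_{s,x}(Y_i)` over the population gives `N · D^s(x)`, so splitting the population into
the response classes `(1,1)`, `(1,0)`, `(0,0)` writes `D^s(x)` as `Σ E[g_{s,x} | a,b] · δ_{ab}`.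
Two finite samples with the same empirical CDF have the same point masses, because `P(Y < y)`
equals `P(Y ≤ u)` for `u` the largest observed value below `y`; hence they have the same mean of
every function of `Y`, and under MCAR the `(0,0)` term merges into the `(1,1)` one. For `B` the
remaining `(1,0)` term lies between `0` and `(x - Y̲^B)^{s-1}/(s-1)! · δ_{10}`, the range of
`g_{s,x}` on `[Y̲^B, ∞)`.
-/

section EmpiricalDistribution

variable {ι : Type*} (Y : ι → ℝ)

def empiricalCDF (S : Finset ι) (u : ℝ) : ℝ :=
  #(S.filter (Y · ≤ u)) / #S

def empiricalMean (S : Finset ι) (g : ℝ → ℝ) : ℝ :=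
  (∑ i ∈ S, g (Y i)) / #S

theorem Finset.exists_forall_lt_iff_le (t : Finset ℝ) (y : ℝ) :
    ∃ u, ∀ v ∈ t, v < y ↔ v ≤ u := by
  set T := insert (y - 1) (t.filter (· < y))
  refine ⟨T.max' (insert_nonempty _ _), fun v hv => ⟨fun hvy => ?_, fun hvu => ?_⟩⟩
  · exact T.le_max' v (mem_insert_of_mem (mem_filter.mpr ⟨hv, hvy⟩))
  · refine hvu.trans_lt ((T.max'_lt_iff _).mpr fun w hw => ?_)
    rcases mem_insert.mp hw with rfl | hw
    · linarith
    · exact (mem_filter.mp hw).2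

variable {Y} {S T : Finset ι} (hcdf : ∀ u, empiricalCDF Y S u = empiricalCDF Y T u)
include hcdf

theorem card_filter_lt_div_eq_of_empiricalCDF_eq (y : ℝ) :
    (#(S.filter (Y · < y)) : ℝ) / #S = #(T.filter (Y · < y)) / #T := by
  obtain ⟨u, hu⟩ := (S.image Y ∪ T.image Y).exists_forall_lt_iff_le y
  have hS : S.filter (Y · < y) = S.filter (Y · ≤ u) :=
    filter_congr fun i hi => hu _ (mem_union_left _ (mem_image_of_mem Y hi))
  have hT : T.filter (Y · < y) = T.filter (Y · ≤ u) :=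
    filter_congr fun i hi => hu _ (mem_union_right _ (mem_image_of_mem Y hi))
  rw [hS, hT]
  exact hcdf u

theorem card_filter_eq_div_eq_of_empiricalCDF_eq (y : ℝ) :
    (#(S.filter (Y · = y)) : ℝ) / #S = #(T.filter (Y · = y)) / #T := by
  have split (U : Finset ι) :
      (#(U.filter (Y · ≤ y)) : ℝ) = #(U.filter (Y · < y)) + #(U.filter (Y · = y)) := by
    classical
    rw [← Nat.cast_add, ← card_union_of_disjoint (disjoint_filter.mpr fun i _ h => h.ne),
      ← filter_or]
    simp only [le_iff_lt_or_eq]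
  have hle := hcdf y
  simp only [empiricalCDF, split, add_div, card_filter_lt_div_eq_of_empiricalCDF_eq hcdf y] at hle
  linarith

theorem empiricalMean_eq_of_empiricalCDF_eq (g : ℝ → ℝ) :
    empiricalMean Y S g = empiricalMean Y T g := by
  have fiberwise (U : Finset ι) (hU : ∀ i ∈ U, Y i ∈ S.image Y ∪ T.image Y) :
      (∑ i ∈ U, g (Y i)) / #U =
        ∑ y ∈ S.image Y ∪ T.image Y, #(U.filter (Y · = y)) / #U * g y := by
    rw [← sum_fiberwise_of_maps_to hU, sum_div]
    refine sum_congr rfl fun y _ => ?_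
    rw [sum_congr rfl fun i hi => congrArg g (mem_filter.mp hi).2, sum_const, nsmul_eq_mul]
    ring
  rw [empiricalMean, empiricalMean,
    fiberwise S fun i hi => mem_union_left _ (mem_image_of_mem Y hi),
    fiberwise T fun i hi => mem_union_right _ (mem_image_of_mem Y hi)]
  simp only [card_filter_eq_div_eq_of_empiricalCDF_eq hcdf]

end EmpiricalDistribution

section ResponseClasses

variable {N : ℕ} (ZA ZB : Fin N → Bool)

def responseClass (a b : Bool) : Finset (Fin N) :=
  univ.filter (fun i => ZA i = a ∧ ZB i = b)

variable {ZA ZB}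

theorem card_responseClass (a b : Bool) :
    (#(responseClass ZA ZB a b) : ℝ) = N * delta ZA ZB a b := by
  rcases N.eq_zero_or_pos with rfl | hN
  · simp [eq_empty_of_isEmpty (responseClass ZA ZB a b)]
  · rw [delta, responseClass, mul_div_cancel₀ _ (by positivity)]

theorem condCDF'_eq_empiricalCDF (Y : Fin N → ℝ) (a b : Bool) (u : ℝ) :
    condCDF' Y ZA ZB a b u = empiricalCDF Y (responseClass ZA ZB a b) u := by
  rw [condCDF', empiricalCDF, ← card_responseClass, responseClass, filter_filter]
  simp only [and_comm]

theorem condMean_eq_empiricalMean (Y : Fin N → ℝ) (a b : Bool) (g : ℝ → ℝ) :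
    condMean Y ZA ZB a b g = empiricalMean Y (responseClass ZA ZB a b) g := by
  rw [condMean, empiricalMean, ← card_responseClass, responseClass]

theorem condMean_eq_of_condCDF'_eq {Y : Fin N → ℝ} {a b a' b' : Bool}
    (h : ∀ u, condCDF' Y ZA ZB a b u = condCDF' Y ZA ZB a' b' u) (g : ℝ → ℝ) :
    condMean Y ZA ZB a b g = condMean Y ZA ZB a' b' g := by
  simp only [condCDF'_eq_empiricalCDF] at h
  simp only [condMean_eq_empiricalMean, empiricalMean_eq_of_empiricalCDF_eq h]

-- No positivity hypothesis: for an empty class both sides vanish, `condMean` being `0 / 0`.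
theorem condMean_mul_delta (Y : Fin N → ℝ) (a b : Bool) (g : ℝ → ℝ) :
    condMean Y ZA ZB a b g * delta ZA ZB a b =
      (∑ i ∈ responseClass ZA ZB a b, g (Y i)) / N := by
  by_cases hδ : delta ZA ZB a b = 0
  · have hempty : responseClass ZA ZB a b = ∅ := by
      simpa [hδ] using card_responseClass (ZA := ZA) (ZB := ZB) a b
    simp [hδ, hempty]
  · have hN : (N : ℝ) ≠ 0 := fun hN => hδ (by simp [delta, hN])
    rw [condMean, ← responseClass]
    field_simp

theorem condMean_mul_delta_nonneg {Y : Fin N → ℝ} {a b : Bool} {g : ℝ → ℝ}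
    (hg : ∀ i ∈ responseClass ZA ZB a b, 0 ≤ g (Y i)) :
    0 ≤ condMean Y ZA ZB a b g * delta ZA ZB a b := by
  rw [condMean_mul_delta]
  exact div_nonneg (sum_nonneg hg) N.cast_nonneg

theorem condMean_mul_delta_le {Y : Fin N → ℝ} {a b : Bool} {g : ℝ → ℝ} {C : ℝ}
    (hg : ∀ i ∈ responseClass ZA ZB a b, g (Y i) ≤ C) :
    condMean Y ZA ZB a b g * delta ZA ZB a b ≤ C * delta ZA ZB a b := by
  rw [condMean_mul_delta, delta, ← responseClass, mul_div_assoc', ← nsmul_eq_mul',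
    ← sum_const]
  exact div_le_div_of_nonneg_right (sum_le_sum hg) N.cast_nonneg

theorem sum_univ_eq_sum_responseClass (hno : ∀ i, ¬(ZA i = false ∧ ZB i = true))
    (f : Fin N → ℝ) :
    ∑ i, f i = ∑ i ∈ responseClass ZA ZB true true, f i
      + ∑ i ∈ responseClass ZA ZB true false, f i
      + ∑ i ∈ responseClass ZA ZB false false, f i := by
  simp only [responseClass, sum_filter, ← sum_add_distrib]
  refine sum_congr rfl fun i _ => ?_
  have hi := hno i
  cases hA : ZA i <;> cases hB : ZB i <;> simp_all

end ResponseClasses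

theorem gfun_nonneg (s : ℕ) {x : ℝ} (y : ℝ) : 0 ≤ gfun s x y := by
  unfold gfun
  split_ifs with hy
  · have : 0 ≤ x - y := sub_nonneg.mpr hy
    positivity
  · simp

theorem gfun_le (s : ℕ) {x y a : ℝ} (hay : a ≤ y) (hax : a ≤ x) :
    gfun s x y ≤ (x - a) ^ (s - 1) / ((s - 1).factorial : ℝ) := by
  have hxa : 0 ≤ x - a := sub_nonneg.mpr hax
  unfold gfun
  split_ifs with hy
  · rw [mul_one]
    gcongr
  · rw [mul_zero]
    positivity

theorem domFn_eq_sum_gfun {N : ℕ} (Y : Fin N → ℝ) (s : ℕ) (x : ℝ) :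
    domFn Y s x = (∑ i, gfun s x (Y i)) / N := by
  simp only [domFn, gfun, mul_ite, mul_one, mul_zero, sum_filter]

theorem domFn_eq_condMean_mul_delta_of_condCDF'_eq {N : ℕ} {Y : Fin N → ℝ}
    {ZA ZB : Fin N → Bool} (hno : ∀ i, ¬(ZA i = false ∧ ZB i = true))
    (hMCAR : ∀ u, condCDF' Y ZA ZB true true u = condCDF' Y ZA ZB false false u)
    (s : ℕ) (x : ℝ) :
    domFn Y s x =
      condMean Y ZA ZB true true (gfun s x) * (delta ZA ZB true true + delta ZA ZB false false)
      + condMean Y ZA ZB true false (gfun s x) * delta ZA ZB true false := by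
  rw [domFn_eq_sum_gfun, sum_univ_eq_sum_responseClass hno, add_div, add_div,
    ← condMean_mul_delta, ← condMean_mul_delta, ← condMean_mul_delta,
    ← condMean_eq_of_condCDF'_eq hMCAR]
  ring

theorem mcar_unit_nonresponse_bounds_general {N : ℕ}
    (YA YB : Fin N → ℝ) (ZA ZB : Fin N → Bool)
    (hno : ∀ i, ¬(ZA i = false ∧ ZB i = true))
    (s : ℕ) (x : ℝ)
    (hMCARA : ∀ u : ℝ, condCDF' YA ZA ZB true true u = condCDF' YA ZA ZB false false u)
    (hMCARB : ∀ u : ℝ, condCDF' YB ZA ZB true true u = condCDF' YB ZA ZB false false u)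
    (YlB : ℝ) (hYB : ∀ i, YlB ≤ YB i) (hBx : YlB ≤ x) :
    (domFn YA s x =
        condMean YA ZA ZB true true (gfun s x) * (delta ZA ZB true true + delta ZA ZB false false)
        + condMean YA ZA ZB true false (gfun s x) * delta ZA ZB true false) ∧
    (condMean YB ZA ZB true true (gfun s x) * (delta ZA ZB true true + delta ZA ZB false false)
        ≤ domFn YB s x ∧
      domFn YB s x ≤
        condMean YB ZA ZB true true (gfun s x) * (delta ZA ZB true true + delta ZA ZB false false)
        + ((x - YlB) ^ (s - 1) / ((s - 1).factorial : ℝ)) * delta ZA ZB true false) := by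
  have hB := domFn_eq_condMean_mul_delta_of_condCDF'_eq hno hMCARB s x
  have hlower := condMean_mul_delta_nonneg (ZA := ZA) (ZB := ZB) (a := true) (b := false)
    fun i _ => gfun_nonneg s (x := x) (YB i)
  have hupper := condMean_mul_delta_le (ZA := ZA) (ZB := ZB) (a := true) (b := false)
    fun i _ => gfun_le s (hYB i) hBx
  exact ⟨domFn_eq_condMean_mul_delta_of_condCDF'_eq hno hMCARA s x, by linarith, by linarith⟩

/-- Proposition D.2 (identification bounds under MCAR for unit nonresponse and the
worst case for wave nonresponse): population A's dominance function is point identified,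
and population B's is bounded. -/
theorem mcar_unit_nonresponse_bounds {N : ℕ} (hN : 1 ≤ N)
    (YA YB : Fin N → ℝ) (ZA ZB : Fin N → Bool)
    (hno : ∀ i, ¬(ZA i = false ∧ ZB i = true))
    (s : ℕ) (hs : 1 ≤ s) (x : ℝ)
    (h11 : 0 < delta ZA ZB true true) (h10 : 0 < delta ZA ZB true false)
    (h00 : 0 < delta ZA ZB false false)
    (hMCARA : ∀ u : ℝ, condCDF' YA ZA ZB true true u = condCDF' YA ZA ZB false false u)
    (hMCARB : ∀ u : ℝ, condCDF' YB ZA ZB true true u = condCDF' YB ZA ZB false false u)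
    (YlB : ℝ) (hYB : ∀ i, YlB ≤ YB i) (hBx : YlB ≤ x) :
    (domFn YA s x =
        condMean YA ZA ZB true true (gfun s x) * (delta ZA ZB true true + delta ZA ZB false false)
        + condMean YA ZA ZB true false (gfun s x) * delta ZA ZB true false) ∧
    (condMean YB ZA ZB true true (gfun s x) * (delta ZA ZB true true + delta ZA ZB false false)
        ≤ domFn YB s x ∧
      domFn YB s x ≤
        condMean YB ZA ZB true true (gfun s x) * (delta ZA ZB true true + delta ZA ZB false false)
        + ((x - YlB) ^ (s - 1) / ((s - 1).factorial : ℝ)) * delta ZA ZB true false) :=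
  mcar_unit_nonresponse_bounds_general YA YB ZA ZB hno s x hMCARA hMCARB YlB hYB hBx
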